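/- Every element P of FSh₂(N) satisfies the reflection relation P(X,Y) = P(−Y,−X). -/

import Mathlib

noncomputable section

open MvPolynomial

/-- The polynomial ring `ℚ[X,Y]`, with `X = X 0` and `Y = X 1`. -/
abbrev R2 : Type := MvPolynomial (Fin 2) ℚ

/-- The field of rational functions `ℚ(X,Y)`. -/
abbrev K2 : Type := FractionRing R2

/-- The substitution `(X, Y) ↦ (X + Y, -Y)` on polynomials. -/
def fayA : R2 →ₐ[ℚ] R2 := aeval ![X 0 + X 1, -X 1]

/-- The substitution `(X, Y) ↦ (-X - Y, X)` on polynomials. -/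
def rotA : R2 →ₐ[ℚ] R2 := aeval ![-X 0 - X 1, X 0]

/-- The substitution `(X, Y) ↦ (Y, X)` on polynomials. -/
def swapA : R2 →ₐ[ℚ] R2 := aeval ![X 1, X 0]

lemma fayA_invol : fayA.comp fayA = AlgHom.id ℚ R2 := by
  apply algHom_ext
  intro i
  fin_cases i <;> simp [fayA]

lemma rotA_cube : rotA.comp (rotA.comp rotA) = AlgHom.id ℚ R2 := by
  apply algHom_ext
  intro i
  fin_cases i <;> simp [rotA]

lemma swapA_invol : swapA.comp swapA = AlgHom.id ℚ R2 := by
  apply algHom_ext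
  intro i
  fin_cases i <;> simp [swapA]

lemma fayA_inj : Function.Injective fayA :=
  Function.LeftInverse.injective (g := fayA) fun x => by
    simpa using DFunLike.congr_fun fayA_invol x

lemma rotA_inj : Function.Injective rotA :=
  Function.LeftInverse.injective (g := rotA.comp rotA) fun x => by
    simpa using DFunLike.congr_fun rotA_cube x

lemma swapA_inj : Function.Injective swapA :=
  Function.LeftInverse.injective (g := swapA) fun x => by
    simpa using DFunLike.congr_fun swapA_invol x

/-- Lift an injective substitution on `ℚ[X,Y]` to the fraction field `ℚ(X,Y)`. -/
def liftK (φ : R2 →ₐ[ℚ] R2) (hφ : Function.Injective φ) : K2 →+* K2 :=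
  IsFractionRing.lift (g := (algebraMap R2 K2).comp φ.toRingHom)
    (fun _ _ h => hφ (IsFractionRing.injective R2 K2 h))

/-- `P(X,Y) ↦ P(X+Y, -Y)` as a `ℚ`-linear endomorphism of `ℚ(X,Y)`. -/
def fayL : K2 →ₗ[ℚ] K2 := (liftK fayA fayA_inj).toAddMonoidHom.toRatLinearMap

/-- `P(X,Y) ↦ P(-X-Y, X)` as a `ℚ`-linear endomorphism of `ℚ(X,Y)`. -/
def rotL : K2 →ₗ[ℚ] K2 := (liftK rotA rotA_inj).toAddMonoidHom.toRatLinearMap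

/-- `P(X,Y) ↦ P(Y, X)` as a `ℚ`-linear endomorphism of `ℚ(X,Y)`. -/
def swapL : K2 →ₗ[ℚ] K2 := (liftK swapA swapA_inj).toAddMonoidHom.toRatLinearMap

/-- The inclusion `ℚ[X,Y] → ℚ(X,Y)` as a `ℚ`-linear map. -/
def algL : R2 →ₗ[ℚ] K2 := (IsScalarTower.toAlgHom ℚ R2 K2).toRingHom.toAddMonoidHom.toRatLinearMap

/-- The element `X·Y ∈ ℚ(X,Y)`. -/
def xyK : K2 := algebraMap R2 K2 (X 0 * X 1)

/-- The length-two Fay-shuffle space `FSh₂(N)`: rational functions `P(X,Y)`,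
homogeneous of degree `N - 2` with at most simple poles along `X = 0` and `Y = 0`
and no other poles (equivalently, `X·Y·P` is a homogeneous polynomial of degree `N`),
satisfying the Fay relation `P(X,Y) + P(X+Y,-Y) + P(-X-Y,X) = 0` and the shuffle
relation `P(X,Y) + P(Y,X) = 0`. -/
def FSh (N : ℕ) : Submodule ℚ K2 :=
  (Submodule.map algL (homogeneousSubmodule (Fin 2) ℚ N)).comap (LinearMap.mulLeft ℚ xyK)
    ⊓ LinearMap.ker (LinearMap.id + fayL + rotL)
    ⊓ LinearMap.ker (LinearMap.id + swapL)


/-- The substitution `(X, Y) ↦ (-Y, -X)` on polynomials. -/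
def reflA : R2 →ₐ[ℚ] R2 := aeval ![-X 1, -X 0]

lemma reflA_invol : reflA.comp reflA = AlgHom.id ℚ R2 := by
  apply algHom_ext
  intro i
  fin_cases i <;> simp [reflA]

lemma reflA_inj : Function.Injective reflA :=
  Function.LeftInverse.injective (g := reflA) fun x => by
    simpa using DFunLike.congr_fun reflA_invol x

/-- `P(X,Y) ↦ P(-Y, -X)` as a `ℚ`-linear endomorphism of `ℚ(X,Y)`. -/
def reflL : K2 →ₗ[ℚ] K2 := (liftK reflA reflA_inj).toAddMonoidHom.toRatLinearMap

/-!
Let `ε` be the substitution `(X,Y) ↦ (-X,-Y)`. The reflection factors both as `ε` after the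
swap and as the rotation `ρ` after the Fay substitution. Since `X·Y·P` is homogeneous of
degree `N`, `ε P = (-1)^N P`, so the shuffle relation gives `refl P = (-1)^(N+1) P`, which is the
claim for odd `N`. For even `N`, `refl P = -P`; applying `ρ` to the Fay relation gives
`ρP - P + ρ²P = 0`, applying it once more (`ρ³ = 1`) gives `ρ²P - ρP + P = 0`, hence `ρ²P = 0`
and `P = 0`.
-/

theorem MvPolynomial.IsHomogeneous.aeval_smul_X {σ R : Type*} [CommSemiring R]
    {φ : MvPolynomial σ R} {n : ℕ} (hφ : φ.IsHomogeneous n) (r : R) :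
    MvPolynomial.aeval (fun i => r • X i) φ = r ^ n • φ := by
  calc MvPolynomial.aeval (fun i => r • X i) φ
      = ∑ d ∈ φ.support, MvPolynomial.aeval (fun i => r • X i) (monomial d (coeff d φ)) := by
        rw [← map_sum, ← as_sum]
    _ = ∑ d ∈ φ.support, r ^ n • monomial d (coeff d φ) := by
        refine Finset.sum_congr rfl fun d hd => ?_
        have hdeg : d.degree = n := by
          rw [Finsupp.degree_eq_weight_one]; exact hφ (mem_support_iff.mp hd)
        rw [aeval_monomial, Finsupp.prod]
        simp_rw [smul_pow]
        rw [Finset.prod_smul, Finset.prod_pow_eq_pow_sum, ← Finsupp.degree_apply, hdeg,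
          monomial_eq, Finsupp.prod, algebraMap_eq, mul_smul_comm]
    _ = r ^ n • φ := by rw [← Finset.smul_sum, ← as_sum]

@[simp]
lemma liftK_algebraMap (φ : R2 →ₐ[ℚ] R2) (hφ : Function.Injective φ) (p : R2) :
    liftK φ hφ (algebraMap R2 K2 p) = algebraMap R2 K2 (φ p) :=
  IsFractionRing.lift_algebraMap _ _

lemma liftK_liftK {φ ψ χ : R2 →ₐ[ℚ] R2} (hφ : Function.Injective φ) (hψ : Function.Injective ψ)
    (hχ : Function.Injective χ) (h : φ.comp ψ = χ) (x : K2) :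
    liftK φ hφ (liftK ψ hψ x) = liftK χ hχ x := by
  have : (liftK φ hφ).comp (liftK ψ hψ) = liftK χ hχ :=
    IsLocalization.ringHom_ext (nonZeroDivisors R2) (RingHom.ext fun p => by simp [← h])
  exact DFunLike.congr_fun this x

lemma liftK_liftK_eq_self {φ ψ : R2 →ₐ[ℚ] R2} (hφ : Function.Injective φ)
    (hψ : Function.Injective ψ) (h : φ.comp ψ = AlgHom.id ℚ R2) (x : K2) :
    liftK φ hφ (liftK ψ hψ x) = x := by
  have : (liftK φ hφ).comp (liftK ψ hψ) = RingHom.id K2 :=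
    IsLocalization.ringHom_ext (nonZeroDivisors R2) <| RingHom.ext fun p => by
      simpa using congrArg (algebraMap R2 K2) (DFunLike.congr_fun h p)
  exact DFunLike.congr_fun this x

lemma rotL_rotL_rotL (x : K2) : rotL (rotL (rotL x)) = x := by
  have hρρ : Function.Injective (rotA.comp rotA) := rotA_inj.comp rotA_inj
  change liftK rotA rotA_inj (liftK rotA rotA_inj (liftK rotA rotA_inj x)) = x
  rw [liftK_liftK rotA_inj rotA_inj hρρ rfl x, liftK_liftK_eq_self rotA_inj hρρ rotA_cube]

lemma rotL_fayL (x : K2) : rotL (fayL x) = reflL x :=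
  liftK_liftK rotA_inj fayA_inj reflA_inj
    (algHom_ext fun i => by fin_cases i <;> simp [rotA, fayA, reflA]; ring) x

def negA : R2 →ₐ[ℚ] R2 := aeval fun i => (-1 : ℚ) • X i

lemma negA_inj : Function.Injective negA :=
  Function.LeftInverse.injective (g := negA) fun x => by
    have : negA.comp negA = AlgHom.id ℚ R2 := algHom_ext fun i => by simp [negA]
    simpa using DFunLike.congr_fun this x

def negK : K2 →+* K2 := liftK negA negA_inj

lemma negK_swapL (x : K2) : negK (swapL x) = reflL x :=
  liftK_liftK negA_inj swapA_inj reflA_inj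
    (algHom_ext fun i => by fin_cases i <;> simp [negA, swapA, reflA]) x

lemma xyK_ne_zero : xyK ≠ 0 :=
  (map_ne_zero_iff _ (IsFractionRing.injective R2 K2)).mpr
    (mul_ne_zero (X_ne_zero 0) (X_ne_zero 1))

lemma negK_xyK : negK xyK = xyK := by
  simp [negK, xyK, negA]

lemma negK_eq_neg_one_pow_mul {N : ℕ} {P : K2} {Q : R2} (hQ : Q.IsHomogeneous N)
    (hQP : algebraMap R2 K2 Q = xyK * P) : negK P = (-1) ^ N * P := by
  refine mul_left_cancel₀ xyK_ne_zero ?_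
  calc xyK * negK P = negK (algebraMap R2 K2 Q) := by rw [hQP, map_mul, negK_xyK]
    _ = (-1) ^ N * algebraMap R2 K2 Q := by
      rw [negK, liftK_algebraMap, negA, hQ.aeval_smul_X]
      simp [Algebra.smul_def]
    _ = xyK * ((-1) ^ N * P) := by rw [hQP]; ring

lemma mem_FSh_iff {N : ℕ} {P : K2} :
    P ∈ FSh N ↔ (∃ Q : R2, Q.IsHomogeneous N ∧ algebraMap R2 K2 Q = xyK * P) ∧
      P + fayL P + rotL P = 0 ∧ P + swapL P = 0 := by
  simp [FSh, algL, and_assoc]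

lemma eq_zero_of_fay_of_reflL_eq_neg {P : K2} (hfay : P + fayL P + rotL P = 0)
    (hrefl : reflL P = -P) : P = 0 := by
  have h₁ : rotL P - P + rotL (rotL P) = 0 := by
    simpa [rotL_fayL, hrefl, add_comm, sub_eq_add_neg] using congrArg rotL hfay
  have h₂ : rotL (rotL P) - rotL P + P = 0 := by
    simpa [rotL_rotL_rotL] using congrArg rotL h₁
  have h₃ : rotL (rotL P) = 0 := by linear_combination (1 / 2 : K2) * (h₁ + h₂)
  simpa [rotL_rotL_rotL] using congrArg rotL h₃

/-- Every element `P` of the Fay-shuffle space `FSh₂(N)` satisfies the reflection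
relation `P(X,Y) = P(-Y,-X)`. -/
theorem FSh_reflection (N : ℕ) (P : K2) (hP : P ∈ FSh N) : P = reflL P := by
  obtain ⟨⟨Q, hQ, hQP⟩, hfay, hshuffle⟩ := mem_FSh_iff.mp hP
  have hrefl : reflL P = -((-1) ^ N * P) := by
    rw [← negK_swapL, eq_neg_of_add_eq_zero_right hshuffle, map_neg,
      negK_eq_neg_one_pow_mul hQ hQP]
  rcases Nat.even_or_odd N with hN | hN
  · have hP0 := eq_zero_of_fay_of_reflL_eq_neg hfay (by rwa [hN.neg_one_pow, one_mul] at hrefl)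
    rw [hP0, map_zero]
  · rw [hrefl, hN.neg_one_pow]
    ring

end
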